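/- Let (Δ_K) be nonnegative reals satisfying Δ_{k+1} ≤ (1 - μ/k)Δ_k + (1/k)·b for all k ≥ 1, where μ ∈ (0,1) and b ≥ 0. Then limsup_{K→∞} Δ_K ≤ (e^μ/μ)·b. -/

import Mathlib

/-!
The point `b / μ` is the fixed point of the affine recursion, so the excess
`g k = (Δ k - b / μ)⁺` satisfies `g (k + 1) ≤ (1 - μ / k) g k`. Hence
`g (k + 1) ≤ g 1 ∏_{1 ≤ i ≤ k} (1 - μ / i) ≤ g 1 exp (-μ H_k)`, which tends to `0` because the
harmonic numbers `H_k` diverge. Thus `limsup Δ ≤ b / μ ≤ e^μ b / μ`.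
-/

open Filter Finset Real Topology

lemma one_sub_div_nonneg_of_le {μ x : ℝ} (hx : 0 ≤ x) (h : μ ≤ x) : 0 ≤ 1 - μ / x :=
  sub_nonneg.2 (div_le_one_of_le₀ h hx)

lemma prod_one_sub_div_le_exp {μ : ℝ} (hμ : μ ≤ 1) (n : ℕ) :
    ∏ i ∈ range n, (1 - μ / (i + 1)) ≤ exp (-μ * ∑ i ∈ range n, 1 / ((i : ℝ) + 1)) := by
  rw [mul_sum, exp_sum]
  refine prod_le_prod (fun i _ => ?_) (fun i _ => ?_)
  · exact one_sub_div_nonneg_of_le (by positivity) (by linarith [i.cast_nonneg (α := ℝ)])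
  · rw [show -μ * (1 / ((i : ℝ) + 1)) = -(μ / (i + 1)) by ring]
    linarith [add_one_le_exp (-(μ / (i + 1)))]

lemma tendsto_prod_one_sub_div_atTop_zero {μ : ℝ} (hμ : 0 < μ) (hμ1 : μ ≤ 1) :
    Tendsto (fun n => ∏ i ∈ range n, (1 - μ / ((i : ℝ) + 1))) atTop (𝓝 0) := by
  have hexp : Tendsto (fun n => exp (-μ * ∑ i ∈ range n, 1 / ((i : ℝ) + 1))) atTop (𝓝 0) :=
    tendsto_exp_atBot.comp
      (tendsto_sum_range_one_div_nat_succ_atTop.const_mul_atTop_of_neg (neg_neg_iff_pos.2 hμ))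
  refine squeeze_zero (fun n => prod_nonneg fun i _ => ?_) (prod_one_sub_div_le_exp hμ1) hexp
  exact one_sub_div_nonneg_of_le (by positivity) (by linarith [i.cast_nonneg (α := ℝ)])

lemma tendsto_zero_of_le_one_sub_div_mul {g : ℕ → ℝ} {μ : ℝ} (hμ : 0 < μ) (hμ1 : μ ≤ 1)
    (hg : ∀ k, 0 ≤ g k) (hrec : ∀ k : ℕ, 1 ≤ k → g (k + 1) ≤ (1 - μ / k) * g k) :
    Tendsto g atTop (𝓝 0) := by
  have hprod : ∀ n, g (n + 1) ≤ g 1 * ∏ i ∈ range n, (1 - μ / ((i : ℝ) + 1)) := by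
    intro n
    induction n with
    | zero => simp
    | succ n ih =>
      have hfac : 0 ≤ 1 - μ / ((n : ℝ) + 1) :=
        one_sub_div_nonneg_of_le (by positivity) (by linarith [n.cast_nonneg (α := ℝ)])
      calc g (n + 1 + 1) ≤ (1 - μ / ((n : ℝ) + 1)) * g (n + 1) := by
            simpa using hrec (n + 1) (by omega)
        _ ≤ (1 - μ / ((n : ℝ) + 1)) * (g 1 * ∏ i ∈ range n, (1 - μ / ((i : ℝ) + 1))) :=
            mul_le_mul_of_nonneg_left ih hfac
        _ = g 1 * ∏ i ∈ range (n + 1), (1 - μ / ((i : ℝ) + 1)) := by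
            rw [prod_range_succ]; ring
  rw [← tendsto_add_atTop_iff_nat 1]
  refine squeeze_zero (fun n => hg (n + 1)) hprod ?_
  simpa using (tendsto_prod_one_sub_div_atTop_zero hμ hμ1).const_mul (g 1)

lemma posPart_le_mul_posPart {c x y : ℝ} (hc : 0 ≤ c) (h : y ≤ c * x) : y⁺ ≤ c * x⁺ :=
  max_le (h.trans (mul_le_mul_of_nonneg_left (le_posPart x) hc)) (mul_nonneg hc (posPart_nonneg x))

lemma sub_div_le_one_sub_div_mul_sub {μ b k x y : ℝ} (hμ : μ ≠ 0)
    (h : y ≤ (1 - μ / k) * x + 1 / k * b) : y - b / μ ≤ (1 - μ / k) * (x - b / μ) := by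
  calc y - b / μ ≤ (1 - μ / k) * x + 1 / k * b - b / μ := by linarith
    _ = (1 - μ / k) * (x - b / μ) := by field_simp; ring

lemma limsup_le_of_tendsto_posPart_sub {u : ℕ → ℝ} {t : ℝ}
    (hbdd : IsBoundedUnder (· ≥ ·) atTop u) (h : Tendsto (fun k => (u k - t)⁺) atTop (𝓝 0)) :
    limsup u atTop ≤ t := by
  have hsum : Tendsto (fun k => t + (u k - t)⁺) atTop (𝓝 t) := by simpa using h.const_add t
  calc limsup u atTop ≤ limsup (fun k => t + (u k - t)⁺) atTop :=
        limsup_le_limsup (.of_forall fun k => by linarith [le_posPart (u k - t)])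
          hbdd.isCoboundedUnder_le hsum.isBoundedUnder_le
    _ = t := hsum.limsup_eq

theorem stmt_11 (Δ : ℕ → ℝ) (μ b : ℝ) (hμ : 0 < μ) (hμ1 : μ < 1) (hb : 0 ≤ b)
    (hΔ : ∀ k, 0 ≤ Δ k)
    (hrec : ∀ k : ℕ, 1 ≤ k → Δ (k + 1) ≤ (1 - μ / (k : ℝ)) * Δ k + (1 / (k : ℝ)) * b) :
    Filter.limsup Δ Filter.atTop ≤ Real.exp 1 ^ μ / μ * b := by
  have hcontract : ∀ k : ℕ, 1 ≤ k → (Δ (k + 1) - b / μ)⁺ ≤ (1 - μ / k) * (Δ k - b / μ)⁺ :=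
    fun k hk => posPart_le_mul_posPart
      (one_sub_div_nonneg_of_le k.cast_nonneg (by linarith [show (1 : ℝ) ≤ k by exact_mod_cast hk]))
      (sub_div_le_one_sub_div_mul_sub hμ.ne' (hrec k hk))
  have hlim : Tendsto (fun k => (Δ k - b / μ)⁺) atTop (𝓝 0) :=
    tendsto_zero_of_le_one_sub_div_mul hμ hμ1.le (fun k => posPart_nonneg _) hcontract
  calc limsup Δ atTop ≤ b / μ := limsup_le_of_tendsto_posPart_sub (isBoundedUnder_of ⟨0, hΔ⟩) hlim
    _ ≤ exp 1 ^ μ / μ * b := by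
      rw [exp_one_rpow, div_mul_eq_mul_div, div_le_div_iff_of_pos_right hμ]
      exact le_mul_of_one_le_left hb (one_le_exp hμ.le)
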